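/- arXiv:1307.1968 — 2 statements merged into one kernel-verified Lean document; each statement's English description precedes it below -/
import Mathlib

section
/- If ℓ²(A) = M ⊕ N, where M and N are closed submodules of the standard Hilbert A-module ℓ²(A) and N has a finite number of generators, then N is a projective A-module. -/
/-!
The truncations of `ℓ²(A)` to finite sets `F` of coordinates converge strongly to the identity
and factor through the free modules `A^F`. Since `N` is closed and finitely generated, the open
mapping theorem expresses each `z ∈ N` through finitely many generators with coefficients of size
`O(‖z‖)`, so the truncations converge to the identity uniformly on `N`. The projection `π` onto
`N` along `M` is bounded by the closed graph theorem, so for `F` large the endomorphism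
`z ↦ π (truncation z)` of `N` is within `1/2` of the identity, hence invertible; as it factors
through `A^F`, this exhibits `N` as a retract of `A^F`.
-/

open Filter Topology Finset

theorem Module.Projective.of_bijective_comp {R M P : Type*} [Semiring R] [AddCommMonoid M]
    [Module R M] [AddCommMonoid P] [Module R P] [Module.Projective R P]
    (t : M →ₗ[R] P) (j : P →ₗ[R] M) (h : Function.Bijective (j ∘ₗ t)) :
    Module.Projective R M :=
  let e := LinearEquiv.ofBijective (j ∘ₗ t) h
  .of_split t (e.symm.toLinearMap ∘ₗ j) (LinearMap.ext e.symm_apply_apply)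

theorem LinearMap.bijective_of_norm_sub_le {𝕜 E : Type*} [NontriviallyNormedField 𝕜]
    [NormedAddCommGroup E] [NormedSpace 𝕜 E] [CompleteSpace E] (T : E →ₗ[𝕜] E) {c : ℝ}
    (hc : c < 1) (hT : ∀ x, ‖x - T x‖ ≤ c * ‖x‖) : Function.Bijective T := by
  set S := (LinearMap.id - T).mkContinuous c hT
  have hS : ‖S‖ < 1 := (LinearMap.mkContinuous_norm_le' _ _).trans_lt (max_lt hc one_pos)
  have hST : ⇑(Units.oneSub S hS : E →L[𝕜] E) = T := by ext x; simp [S]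
  exact hST ▸ (ContinuousLinearEquiv.unitsEquiv 𝕜 E (Units.oneSub S hS)).bijective

section NormedAlgebraModule

variable {A E : Type*} [NormedRing A] [NormedAddCommGroup E] [Module A E] [CompleteSpace E]

theorem Submodule.isTopCompl_of_isCompl_of_isClosed (𝕜 : Type*) [NontriviallyNormedField 𝕜]
    [NormedAlgebra 𝕜 A] [NormedSpace 𝕜 E] [IsScalarTower 𝕜 A E]
    {p q : Submodule A E} (h : IsCompl p q)
    (hp : IsClosed (p : Set E)) (hq : IsClosed (q : Set E)) : p.IsTopCompl q := by
  have h𝕜 : IsCompl (p.restrictScalars 𝕜) (q.restrictScalars 𝕜) :=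
    (isCompl_restrictScalars_iff 𝕜).2 h
  exact ⟨h, (IsCompl.isTopCompl_of_isClosed h𝕜 hp hq).continuous_projection⟩

variable [CompleteSpace A] [IsBoundedSMul A E]

theorem Submodule.FG.exists_fin_generators_bounded_coeffs (𝕜 : Type*) [NontriviallyNormedField 𝕜]
    [NormedAlgebra 𝕜 A] [NormedSpace 𝕜 E] [IsScalarTower 𝕜 A E]
    {N : Submodule A E} (hfg : N.FG) (hN : IsClosed (N : Set E)) :
    ∃ (k : ℕ) (g : Fin k → E) (C : ℝ),
      ∀ z ∈ N, ∃ c : Fin k → A, ∑ i, c i • g i = z ∧ ‖c‖ ≤ C * ‖z‖ := by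
  obtain ⟨k, g, hg⟩ := Submodule.fg_iff_exists_fin_generating_family.1 hfg
  have := hN.completeSpace_coe
  have hrange : ∀ c, Fintype.linearCombination A g c ∈ N := fun c =>
    hg ▸ Fintype.range_linearCombination A g ▸ LinearMap.mem_range_self _ c
  set σ := (Fintype.linearCombination A g).codRestrict N hrange
  have hσ : Function.Surjective σ := by
    rintro ⟨z, hz⟩
    rw [← hg, ← Fintype.range_linearCombination] at hz
    obtain ⟨c, rfl⟩ := hz
    exact ⟨c, rfl⟩
  have hcont : Continuous (σ.restrictScalars 𝕜) := by
    refine Continuous.subtype_mk ?_ hrange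
    show Continuous fun c => Fintype.linearCombination A g c
    simp only [Fintype.linearCombination_apply]
    fun_prop
  obtain ⟨C, -, hC⟩ := ContinuousLinearMap.exists_preimage_norm_le ⟨_, hcont⟩ hσ
  refine ⟨k, g, C, fun z hz => ?_⟩
  obtain ⟨c, hc, hcz⟩ := hC ⟨z, hz⟩
  exact ⟨c, (Fintype.linearCombination_apply A g c).symm.trans (congrArg Subtype.val hc), hcz⟩

theorem Submodule.FG.eventually_forall_norm_sub_le (𝕜 : Type*) [NontriviallyNormedField 𝕜]
    [NormedAlgebra 𝕜 A] [NormedSpace 𝕜 E] [IsScalarTower 𝕜 A E]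
    {N : Submodule A E} (hfg : N.FG) (hN : IsClosed (N : Set E)) {ι : Type*} {l : Filter ι}
    (Q : ι → E →ₗ[A] E) (hQ : ∀ x, Tendsto (fun i => Q i x) l (𝓝 x)) {ε : ℝ} (hε : 0 < ε) :
    ∀ᶠ i in l, ∀ z ∈ N, ‖Q i z - z‖ ≤ ε * ‖z‖ := by
  obtain ⟨k, g, C, hC⟩ := hfg.exists_fin_generators_bounded_coeffs 𝕜 hN
  have herr : Tendsto (fun i => C * ∑ j, ‖Q i (g j) - g j‖) l (𝓝 0) := by
    simpa using (tendsto_finsetSum _ fun j _ =>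
      tendsto_iff_norm_sub_tendsto_zero.1 (hQ (g j))).const_mul C
  filter_upwards [herr.eventually (eventually_le_nhds hε)] with i hi z hz
  obtain ⟨c, hcz, hc⟩ := hC z hz
  calc ‖Q i z - z‖ = ‖∑ j, c j • (Q i (g j) - g j)‖ := by
        simp [← hcz, map_sum, smul_sub, sum_sub_distrib]
    _ ≤ ∑ j, ‖c j‖ * ‖Q i (g j) - g j‖ := norm_sum_le_of_le _ fun j _ => norm_smul_le _ _
    _ ≤ ∑ j, C * ‖z‖ * ‖Q i (g j) - g j‖ := by
        gcongr with j; exact (norm_le_pi_norm c j).trans hc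
    _ = (C * ∑ j, ‖Q i (g j) - g j‖) * ‖z‖ := by rw [← mul_sum]; ring
    _ ≤ ε * ‖z‖ := by gcongr

theorem Submodule.IsTopCompl.projective_of_fg (𝕜 : Type*) [NontriviallyNormedField 𝕜]
    [NormedAlgebra 𝕜 A] [NormedSpace 𝕜 E] [IsScalarTower 𝕜 A E]
    {M N : Submodule A E} (h : N.IsTopCompl M)
    (hfg : N.FG) {ι : Type*} {l : Filter ι} [l.NeBot] {P : ι → Type*}
    [∀ i, AddCommGroup (P i)] [∀ i, Module A (P i)] [∀ i, Module.Projective A (P i)]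
    (t : ∀ i, E →ₗ[A] P i) (j : ∀ i, P i →ₗ[A] E)
    (hjt : ∀ x, Tendsto (fun i => j i (t i x)) l (𝓝 x)) :
    Module.Projective A N := by
  have hN : IsClosed (N : Set E) := h.isClosed
  have := hN.completeSpace_coe
  set π := N.projectionOntoL M h
  set K := ‖π.restrictScalars 𝕜‖
  obtain ⟨i, hi⟩ := (hfg.eventually_forall_norm_sub_le 𝕜 hN (fun i => j i ∘ₗ t i) hjt
    (ε := 1 / (2 * (K + 1))) (by positivity)).exists
  refine Module.Projective.of_bijective_comp (t i ∘ₗ N.subtype) (π.toLinearMap ∘ₗ j i) ?_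
  refine LinearMap.bijective_of_norm_sub_le
    ((π.toLinearMap ∘ₗ j i ∘ₗ t i ∘ₗ N.subtype).restrictScalars 𝕜) (c := 1 / 2) (by norm_num)
    fun z => ?_
  have hz : z - π (j i (t i z)) = π.restrictScalars 𝕜 (z - j i (t i z)) := by simp [π]
  calc ‖z - π (j i (t i z))‖ ≤ K * ‖(z : E) - j i (t i z)‖ :=
        hz ▸ ContinuousLinearMap.le_opNorm _ _
    _ ≤ K * (1 / (2 * (K + 1)) * ‖z‖) := by
        rw [norm_sub_rev]; gcongr; exact hi z z.2
    _ ≤ 1 / 2 * ‖z‖ := by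
        rw [← mul_assoc]; gcongr
        rw [mul_one_div, div_le_iff₀ (by positivity)]; linarith

end NormedAlgebraModule

noncomputable section

namespace Ell2

variable {A : Type*} [CStarAlgebra A] [PartialOrder A] [StarOrderedRing A]

/-- `√‖∑ i ∈ F, x i * star (x i)‖`, realised as the norm of the C⋆-module `A^F` so as to inherit
its triangle inequality. -/
def partialNorm (x : ℕ → A) (F : Finset ℕ) : ℝ :=
  ‖(WithCStarModule.equiv A (F → A)).symm fun i => x i‖

theorem partialNorm_eq_sqrt (x : ℕ → A) (F : Finset ℕ) :
    partialNorm x F = √‖∑ i ∈ F, x i * star (x i)‖ := by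
  rw [partialNorm, WithCStarModule.pi_norm, ← sum_coe_sort F]
  rfl

theorem partialNorm_add_le (x y : ℕ → A) (F : Finset ℕ) :
    partialNorm (x + y) F ≤ partialNorm x F + partialNorm y F :=
  norm_add_le _ _

theorem partialNorm_smul (c : ℂ) (x : ℕ → A) (F : Finset ℕ) :
    partialNorm (c • x) F = ‖c‖ * partialNorm x F :=
  norm_smul c _

theorem norm_apply_le_partialNorm (x : ℕ → A) {F : Finset ℕ} {i : ℕ} (hi : i ∈ F) :
    ‖x i‖ ≤ partialNorm x F :=
  WithCStarModule.norm_apply_le_norm (A := A) (fun j : F => x j) ⟨i, hi⟩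

theorem partialNorm_mono (x : ℕ → A) : Monotone (partialNorm x) := fun F G hFG => by
  simp only [partialNorm_eq_sqrt]
  gcongr
  exact CStarAlgebra.norm_le_norm_of_nonneg_of_le (sum_nonneg fun i _ => mul_star_self_nonneg _)
    (sum_le_sum_of_subset_of_nonneg hFG fun i _ _ => mul_star_self_nonneg _)

theorem continuous_partialNorm (F : Finset ℕ) : Continuous fun x : ℕ → A => partialNorm x F := by
  have hres : Continuous fun x : ℕ → A => fun i : F => x i :=
    continuous_pi fun i => continuous_apply (i : ℕ)
  exact ((WithCStarModule.equivL ℂ).symm.continuous.comp hres).norm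

theorem summable_mul_star_iff {x : ℕ → A} : Summable (fun i => x i * star (x i)) ↔
    ∀ ε > 0, ∃ s : Finset ℕ, ∀ t, Disjoint t s → partialNorm x t < ε := by
  simp only [summable_iff_vanishing_norm, partialNorm_eq_sqrt]
  refine ⟨fun h ε hε => ?_, fun h ε hε => ?_⟩
  · obtain ⟨s, hs⟩ := h (ε ^ 2) (by positivity)
    exact ⟨s, fun t ht => (Real.sqrt_lt' hε).2 (hs t ht)⟩
  · obtain ⟨s, hs⟩ := h (√ε) (Real.sqrt_pos.2 hε)
    exact ⟨s, fun t ht => (Real.sqrt_lt_sqrt_iff (norm_nonneg _)).1 (hs t ht)⟩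

variable (A) in
def seq : Submodule A (ℕ → A) where
  carrier := {x | Summable fun i => x i * star (x i)}
  zero_mem' := by simp
  add_mem' {x y} hx hy := by
    change Summable _ at hx hy ⊢
    rw [summable_mul_star_iff] at *
    intro ε hε
    obtain ⟨s, hs⟩ := hx (ε / 2) (by positivity)
    obtain ⟨s', hs'⟩ := hy (ε / 2) (by positivity)
    refine ⟨s ∪ s', fun t ht => (partialNorm_add_le x y t).trans_lt ?_⟩
    linarith [hs t (disjoint_union_right.1 ht).1, hs' t (disjoint_union_right.1 ht).2]
  smul_mem' a x hx := by
    convert (hx.mul_left a).mul_right (star a) using 2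
    simp [star_mul, mul_assoc]

theorem mem_seq {x : ℕ → A} : x ∈ seq A ↔ Summable fun i => x i * star (x i) := Iff.rfl

end Ell2

/-- A type synonym rather than the subtype itself: the subtype would carry the product topology
of `ℕ → A`, whereas `Ell2 A` gets only the topology of the `ℓ²` norm. -/
def Ell2 (A : Type*) [CStarAlgebra A] [PartialOrder A] [StarOrderedRing A] : Type _ := Ell2.seq A

namespace Ell2

variable {A : Type*} [CStarAlgebra A] [PartialOrder A] [StarOrderedRing A]

instance : AddCommGroup (Ell2 A) := inferInstanceAs (AddCommGroup (seq A))
instance : Module A (Ell2 A) := inferInstanceAs (Module A (seq A))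
instance : Module ℂ (Ell2 A) := inferInstanceAs (Module ℂ (seq A))
instance : IsScalarTower ℂ A (Ell2 A) := inferInstanceAs (IsScalarTower ℂ A (seq A))
instance : CoeFun (Ell2 A) fun _ => ℕ → A := ⟨Subtype.val⟩

def mk (x : ℕ → A) (hx : x ∈ seq A) : Ell2 A := ⟨x, hx⟩

@[ext] theorem ext {x y : Ell2 A} (h : ∀ i, x i = y i) : x = y := Subtype.ext (funext h)

@[simp] theorem coe_zero : ⇑(0 : Ell2 A) = 0 := rfl
@[simp] theorem coe_sub (x y : Ell2 A) : ⇑(x - y) = x - y := rfl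
@[simp] theorem coe_smul (a : A) (x : Ell2 A) : ⇑(a • x) = a • ⇑x := rfl

theorem summable (x : Ell2 A) : Summable fun i => x i * star (x i) := x.2

instance : Norm (Ell2 A) := ⟨fun x => √‖∑' i, x i * star (x i)‖⟩

theorem norm_def (x : Ell2 A) : ‖x‖ = √‖∑' i, x i * star (x i)‖ := rfl

theorem norm_sq (x : Ell2 A) : ‖x‖ ^ 2 = ‖∑' i, x i * star (x i)‖ :=
  Real.sq_sqrt (norm_nonneg _)

theorem tendsto_partialNorm (x : Ell2 A) : Tendsto (partialNorm x) atTop (𝓝 ‖x‖) := by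
  have : Tendsto (fun F => ∑ i ∈ F, x i * star (x i)) atTop (𝓝 (∑' i, x i * star (x i))) :=
    x.summable.hasSum
  rw [funext (partialNorm_eq_sqrt x), norm_def]
  exact this.norm.sqrt

theorem partialNorm_le_norm (x : Ell2 A) (F : Finset ℕ) : partialNorm x F ≤ ‖x‖ :=
  (partialNorm_mono x).ge_of_tendsto (tendsto_partialNorm x) F

theorem norm_le_of_forall_partialNorm_le (x : Ell2 A) {c : ℝ} (h : ∀ F, partialNorm x F ≤ c) :
    ‖x‖ ≤ c :=
  le_of_tendsto' (tendsto_partialNorm x) h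

theorem norm_apply_le (x : Ell2 A) (i : ℕ) : ‖x i‖ ≤ ‖x‖ :=
  (norm_apply_le_partialNorm x (mem_singleton_self i)).trans (partialNorm_le_norm x _)

theorem normedSpaceCore : NormedSpace.Core ℂ (Ell2 A) where
  norm_nonneg x := Real.sqrt_nonneg _
  norm_smul c x := by
    have h : partialNorm ⇑(c • x) = fun F => ‖c‖ * partialNorm x F :=
      funext (partialNorm_smul c x)
    exact tendsto_nhds_unique (tendsto_partialNorm (c • x))
      (h ▸ (tendsto_partialNorm x).const_mul ‖c‖)
  norm_triangle x y := norm_le_of_forall_partialNorm_le _ fun F =>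
    (partialNorm_add_le x y F).trans (add_le_add (partialNorm_le_norm x F)
      (partialNorm_le_norm y F))
  norm_eq_zero_iff x := by
    refine ⟨fun h => ext fun i => norm_le_zero_iff.1 (h ▸ norm_apply_le x i), ?_⟩
    rintro rfl
    simp [norm_def]

instance : NormedAddCommGroup (Ell2 A) := .ofCore normedSpaceCore

instance : NormedSpace ℂ (Ell2 A) := .ofCore normedSpaceCore

theorem norm_smul_le (a : A) (x : Ell2 A) : ‖a • x‖ ≤ ‖a‖ * ‖x‖ := by
  have h : ∑' i, (a • x) i * star ((a • x) i) = a * (∑' i, x i * star (x i)) * star a := by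
    rw [← x.summable.tsum_mul_left, ← (x.summable.mul_left a).tsum_mul_right]
    simp [star_mul, mul_assoc]
  refine (pow_le_pow_iff_left₀ (norm_nonneg _) (by positivity) two_ne_zero).1 ?_
  calc ‖a • x‖ ^ 2 = ‖a * (∑' i, x i * star (x i)) * star a‖ := by rw [norm_sq, h]
    _ ≤ ‖a‖ * ‖∑' i, x i * star (x i)‖ * ‖a‖ := by
        grw [norm_mul_le, norm_mul_le, norm_star]
    _ = (‖a‖ * ‖x‖) ^ 2 := by rw [mul_pow, norm_sq]; ring

instance : IsBoundedSMul A (Ell2 A) := .of_norm_smul_le norm_smul_le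

theorem lipschitzWith_apply (i : ℕ) : LipschitzWith 1 fun x : Ell2 A => x i :=
  .of_dist_le_mul fun x y => by
    simpa [dist_eq_norm] using norm_apply_le (x - y) i

theorem mem_seq_of_forall_partialNorm_sub_le {y : ℕ → A}
    (h : ∀ ε > 0, ∃ x ∈ seq A, ∀ F, partialNorm (y - x) F ≤ ε) : y ∈ seq A := by
  rw [mem_seq, summable_mul_star_iff]
  intro ε hε
  obtain ⟨x, hx, hyx⟩ := h (ε / 2) (by positivity)
  obtain ⟨s, hs⟩ := (summable_mul_star_iff.1 hx) (ε / 2) (by positivity)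
  refine ⟨s, fun t ht => ?_⟩
  have := partialNorm_add_le (y - x) x t
  rw [sub_add_cancel] at this
  linarith [hyx t, hs t ht]

instance : CompleteSpace (Ell2 A) := by
  refine Metric.complete_of_cauchySeq_tendsto fun u hu => ?_
  choose y hlim using fun i => cauchySeq_tendsto_of_complete
    ((lipschitzWith_apply i).uniformContinuous.comp_cauchySeq hu)
  -- Partial norms depend continuously on finitely many coordinates, so the Cauchy bounds pass
  -- to the coordinatewise limit `y`, uniformly in `F`.
  have hclose : ∀ ε > 0, ∃ N, ∀ n ≥ N, ∀ F, partialNorm (y - ⇑(u n)) F ≤ ε := by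
    intro ε hε
    obtain ⟨N, hN⟩ := Metric.cauchySeq_iff.1 hu ε hε
    refine ⟨N, fun n hn F => le_of_tendsto
      (((continuous_partialNorm F).tendsto _).comp
        (tendsto_pi_nhds.2 fun i => (hlim i).sub_const (u n i)))
      ((eventually_ge_atTop N).mono fun m hm => ?_)⟩
    exact (partialNorm_le_norm (u m - u n) F).trans (dist_eq_norm (u m) (u n) ▸ hN m hm n hn).le
  have hy : y ∈ seq A := mem_seq_of_forall_partialNorm_sub_le fun ε hε => by
    obtain ⟨N, hN⟩ := hclose ε hε
    exact ⟨u N, (u N).2, hN N le_rfl⟩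
  refine ⟨mk y hy, Metric.tendsto_atTop.2 fun ε hε => ?_⟩
  obtain ⟨N, hN⟩ := hclose (ε / 2) (by positivity)
  refine ⟨N, fun n hn => ?_⟩
  rw [dist_comm, dist_eq_norm]
  exact (norm_le_of_forall_partialNorm_le _ (hN n hn)).trans_lt (half_lt_self hε)

def restrictFinset (F : Finset ℕ) : Ell2 A →ₗ[A] (F → A) where
  toFun x i := x i
  map_add' _ _ := rfl
  map_smul' _ _ := rfl

def extendByZero (F : Finset ℕ) : (F → A) →ₗ[A] Ell2 A :=
  (Function.ExtendByZero.linearMap A ((↑) : F → ℕ)).codRestrict (seq A) fun v =>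
    summable_of_ne_finset_zero (s := F) fun i hi => by
      simp [Function.extend_apply' _ _ _ (by simpa using hi : ¬∃ j : F, (j : ℕ) = i)]

theorem sub_extendByZero_restrictFinset_apply (x : Ell2 A) (F : Finset ℕ) (i : ℕ) :
    (x - extendByZero F (restrictFinset F x)) i = if i ∈ F then 0 else x i := by
  change x i - Function.extend Subtype.val (fun j : F => x j) 0 i = _
  by_cases h : i ∈ F
  · rw [if_pos h, show i = ((⟨i, h⟩ : F) : ℕ) from rfl, Subtype.val_injective.extend_apply,
      sub_self]
  · rw [if_neg h, Function.extend_apply' _ _ _ (by simpa using h), Pi.zero_apply, sub_zero]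

theorem tendsto_extendByZero_restrictFinset (x : Ell2 A) :
    Tendsto (fun F => extendByZero F (restrictFinset F x)) atTop (𝓝 x) := by
  set f := fun i => x i * star (x i)
  have hS : Tendsto (fun F => ∑ i ∈ F, f i) atTop (𝓝 (∑' i, f i)) := x.summable.hasSum
  have htail (F : Finset ℕ) :
      ‖x - extendByZero F (restrictFinset F x)‖ = √‖∑' i, f i - ∑ i ∈ F, f i‖ := by
    have hF : HasSum (fun i => if i ∈ F then f i else 0) (∑ i ∈ F, f i) := by
      simpa using hasSum_sum_of_ne_finset_zero (s := F)
        (f := fun i => if i ∈ F then f i else 0) fun i hi => if_neg hi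
    have hsub := x.summable.hasSum.sub hF
    rw [norm_def, ← hsub.tsum_eq]
    congr 3 with i
    by_cases h : i ∈ F <;> simp [sub_extendByZero_restrictFinset_apply, h, f]
  rw [tendsto_iff_norm_sub_tendsto_zero]
  simp_rw [norm_sub_rev _ x, htail]
  simpa using ((tendsto_const_nhds (x := ∑' i, f i)).sub hS).norm.sqrt

theorem isClosed_of_forall_tsum_lt {S : Set (Ell2 A)}
    (hS : ∀ x : Ell2 A,
      (∀ ε > (0 : ℝ), ∃ y ∈ S, ‖∑' i, (⇑x - ⇑y) i * star ((⇑x - ⇑y) i)‖ < ε) → x ∈ S) :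
    IsClosed S := by
  refine isClosed_of_closure_subset fun x hx => hS x fun ε hε => ?_
  obtain ⟨y, hy, hxy⟩ := Metric.mem_closure_iff.1 hx √ε (Real.sqrt_pos.2 hε)
  rw [dist_eq_norm, Real.lt_sqrt (norm_nonneg _), norm_sq] at hxy
  exact ⟨y, hy, hxy⟩

theorem projective_of_isCompl_of_isClosed_of_fg {M N : Submodule A (Ell2 A)} (hMN : IsCompl M N)
    (hM : IsClosed (M : Set (Ell2 A))) (hN : IsClosed (N : Set (Ell2 A))) (hfg : N.FG) :
    Module.Projective A N :=
  (Submodule.isTopCompl_of_isCompl_of_isClosed ℂ hMN.symm hN hM).projective_of_fg ℂ hfg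
    (l := atTop) restrictFinset extendByZero tendsto_extendByZero_restrictFinset

end Ell2

end

/-- If `ℓ²(A) = M ⊕ N` with `M`, `N` closed submodules of the standard Hilbert `A`-module
`ℓ²(A)` (sequences `(a_i)` with `Σ a_i a_i*` convergent in `A`, with norm
`‖x‖² = ‖Σ x_i x_i*‖`), and `N` has a finite number of generators, then `N` is a
projective `A`-module. -/
theorem l2_direct_summand_fg_projective
    {A : Type*} [CStarAlgebra A] [PartialOrder A] [StarOrderedRing A]
    (L : Submodule A (ℕ → A))
    (hL : ∀ x : ℕ → A, x ∈ L ↔ Summable (fun i => x i * star (x i)))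
    (M N : Submodule A L)
    (hMN : IsCompl M N)
    -- `M` and `N` are closed with respect to the Hilbert module norm
    -- `‖x‖ = ‖Σ x_i x_i*‖^{1/2}` on `ℓ²(A)`:
    (hMclosed : ∀ x : L, (∀ ε > (0:ℝ), ∃ y ∈ M,
        ‖∑' i, ((x:ℕ → A) - (y:L)) i * star (((x:ℕ → A) - (y:L)) i)‖ < ε) → x ∈ M)
    (hNclosed : ∀ x : L, (∀ ε > (0:ℝ), ∃ y ∈ N,
        ‖∑' i, ((x:ℕ → A) - (y:L)) i * star (((x:ℕ → A) - (y:L)) i)‖ < ε) → x ∈ N)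
    (hNfg : N.FG) :
    Module.Projective A N := by
  obtain rfl : L = Ell2.seq A := SetLike.ext hL
  exact Ell2.projective_of_isCompl_of_isClosed_of_fg hMN
    (Ell2.isClosed_of_forall_tsum_lt hMclosed) (Ell2.isClosed_of_forall_tsum_lt hNclosed) hNfg
end

section
/- Let T be an adjointable operator with closed range N₀ = Ran T, and T₀: M → N₀ its corestriction. Then there exists δ > 0 such that ‖y‖ ≤ δ⁻²‖T₀T₀* y‖ for all y ∈ N₀; in particular T₀T₀* is bounded below and invertible on N₀. -/
/-!
By the open mapping theorem every `y ∈ Ran T` is `T x` with `‖x‖ ≤ C ‖y‖`, and Cauchy–Schwarz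
applied to `‖y‖² = ‖⟪x, T* y⟫‖` gives `‖y‖ ≤ C ‖T* y‖`. For `t ≥ 0` one has
`⟪(TT* + t) y, y⟫ ≥ ⟪T* y, T* y⟫`, so Cauchy–Schwarz once more yields `‖y‖ ≤ C² ‖(TT* + t) y‖`
on `Ran T`, uniformly in `t`. Closed submodules of Hilbert C⋆-modules need not be complemented,
so invertibility of `T₀T₀*` on the complete space `Ran T` comes from a continuation argument
instead: `T₀T₀* + t` is invertible for large `t`, and the uniform bound on its inverse keeps it
invertible all the way down to `t = 0`.
-/

open scoped RightActions in
/-- The Hilbert C⋆-module class with the right-action convention of the December 2024 Mathlib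
(`CStarModule` there), where `A` acts on the right via `SMul Aᵐᵒᵖ E`. -/
class CStarModuleRight (A E : Type*) [NonUnitalSemiring A] [StarRing A]
    [Module ℂ A] [AddCommGroup E] [Module ℂ E] [PartialOrder A] [SMul Aᵐᵒᵖ E] [Norm A] [Norm E]
    extends Inner A E where
  inner_add_right {x} {y} {z} : inner x (y + z) = inner x y + inner x z
  inner_self_nonneg {x} : 0 ≤ inner x x
  inner_self {x} : inner x x = 0 ↔ x = 0
  inner_op_smul_right {a : A} {x y : E} : inner x (y <• a) = inner x y * a
  inner_smul_right_complex {z : ℂ} {x} {y} : inner x (z • y) = z • inner x y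
  star_inner x y : star (inner x y) = inner y x
  norm_eq_sqrt_norm_inner_self x : ‖x‖ = √‖inner x x‖

open MulOpposite in
/-- A right Hilbert `A`-module is a Hilbert `Aᵐᵒᵖ`-module in Mathlib's convention, with inner
product `op ⟪x, y⟫`; this makes Mathlib's Cauchy–Schwarz inequality available. -/
instance CStarModuleRight.toCStarModuleMulOpposite {A E : Type*} [NonUnitalSeminormedRing A]
    [StarRing A] [Module ℂ A] [AddCommGroup E] [Module ℂ E] [PartialOrder A] [SMul Aᵐᵒᵖ E] [Norm E]
    [CStarModuleRight A E] : CStarModule Aᵐᵒᵖ E where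
  inner x y := op (inner A x y)
  inner_add_right := by simp [CStarModuleRight.inner_add_right]
  inner_self_nonneg := CStarModuleRight.inner_self_nonneg (A := A)
  inner_self := by simp [CStarModuleRight.inner_self (A := A)]
  inner_op_smul_right {a x y} := by
    rw [← op_unop a, ← unop_injective.eq_iff]
    exact CStarModuleRight.inner_op_smul_right
  inner_smul_right_complex := by simp [CStarModuleRight.inner_smul_right_complex]
  star_inner x y := congrArg op (CStarModuleRight.star_inner (A := A) x y)
  norm_eq_sqrt_norm_inner_self x := CStarModuleRight.norm_eq_sqrt_norm_inner_self (A := A) x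

section UnitsOfBoundedResolvent

variable {𝕜 R : Type*} [RCLike 𝕜] [NormedRing R] [NormedAlgebra 𝕜 R] [NormOneClass R]
  [CompleteSpace R]

lemma isUnit_add_algebraMap_of_abs_sub_lt {a : R} {B s t : ℝ}
    (ht : IsUnit (a + algebraMap 𝕜 R t)) (hinv : ‖Ring.inverse (a + algebraMap 𝕜 R t)‖ ≤ B)
    (hst : |s - t| < B⁻¹) : IsUnit (a + algebraMap 𝕜 R s) := by
  have := NormOneClass.nontrivial (G := R)
  obtain ⟨u, hu⟩ := ht
  rw [← hu, Ring.inverse_unit] at hinv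
  have hdist : ‖(a + algebraMap 𝕜 R s) - u‖ < ‖(↑u⁻¹ : R)‖⁻¹ := by
    rw [hu, add_sub_add_left_eq_sub, ← map_sub, norm_algebraMap', ← RCLike.ofReal_sub,
      RCLike.norm_ofReal]
    exact hst.trans_le (inv_anti₀ (Units.norm_pos _) hinv)
  exact (u.ofNearby _ hdist).isUnit

theorem isUnit_of_forall_norm_inverse_add_algebraMap_le {a : R} {B : ℝ} (hB : 0 < B)
    (h : ∀ t : ℝ, 0 ≤ t → IsUnit (a + algebraMap 𝕜 R t) →
      ‖Ring.inverse (a + algebraMap 𝕜 R t)‖ ≤ B) :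
    IsUnit a := by
  have hlarge : ∀ t : ℝ, ‖a‖ < t → IsUnit (a + algebraMap 𝕜 R t) := by
    intro t ht
    have hnot : ((-t : ℝ) : 𝕜) ∉ spectrum 𝕜 a := fun hmem => by
      have := mem_closedBall_zero_iff.mp (spectrum.subset_closedBall_norm a hmem)
      rw [RCLike.norm_ofReal, abs_neg] at this
      exact (le_abs_self t).trans this |>.not_gt ht
    have := (spectrum.notMem_iff.mp hnot).neg
    rwa [neg_sub, RCLike.ofReal_neg, map_neg, sub_neg_eq_add] at this
  have hwalk : ∀ n : ℕ, ∀ t : ℝ, 0 ≤ t → ‖a‖ < t + n * (B⁻¹ / 2) →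
      IsUnit (a + algebraMap 𝕜 R t) := by
    intro n
    induction n with
    | zero => simpa using fun t _ => hlarge t
    | succ n ih =>
      intro t ht hn
      have hnext : 0 ≤ t + B⁻¹ / 2 := by positivity
      have hunit := ih (t + B⁻¹ / 2) hnext (by push_cast at hn; linarith)
      refine isUnit_add_algebraMap_of_abs_sub_lt hunit (h _ hnext hunit) ?_
      rw [sub_add_cancel_left, abs_neg, abs_of_pos (by positivity)]
      linarith [inv_pos.mpr hB]
  obtain ⟨n, hn⟩ := exists_nat_gt (‖a‖ / (B⁻¹ / 2))
  simpa using hwalk n 0 le_rfl (by rwa [zero_add, ← div_lt_iff₀ (by positivity)])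

end UnitsOfBoundedResolvent

theorem ContinuousLinearMap.isUnit_of_forall_norm_le_mul_norm_add {𝕜 F : Type*} [RCLike 𝕜]
    [NormedAddCommGroup F] [NormedSpace 𝕜 F] [CompleteSpace F] {S : F →L[𝕜] F} {B : ℝ}
    (hB : 0 < B) (h : ∀ t : ℝ, 0 ≤ t → ∀ z, ‖z‖ ≤ B * ‖S z + (t : 𝕜) • z‖) : IsUnit S := by
  rcases subsingleton_or_nontrivial F with hF | hF
  · exact isUnit_of_subsingleton S
  refine isUnit_of_forall_norm_inverse_add_algebraMap_le (𝕜 := 𝕜) hB fun t ht ⟨u, hu⟩ => ?_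
  rw [← hu, Ring.inverse_unit]
  refine opNorm_le_bound _ hB.le fun z => ?_
  set v : F →L[𝕜] F := ↑u⁻¹
  have hz : S (v z) + (t : 𝕜) • v z = z := by
    simpa [v, hu] using congr($(u.mul_inv) z)
  simpa [hz] using h t ht (v z)

namespace CStarModule

open scoped ComplexOrder

variable {A : Type*} [NonUnitalCStarAlgebra A] [PartialOrder A] [StarOrderedRing A]
  {M N : Type*} [NormedAddCommGroup M] [NormedSpace ℂ M] [SMul A M] [CStarModule A M]
  [NormedAddCommGroup N] [NormedSpace ℂ N] [SMul A N] [CStarModule A N]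
  {T : M →L[ℂ] N} {Tadj : N →L[ℂ] M}

local notation "⟪" x ", " y "⟫" => inner A x y

lemma norm_le_mul_norm_adjoint (hadj : ∀ x y, ⟪T x, y⟫ = ⟪x, Tadj y⟫) {x : M} {C : ℝ}
    (hx : ‖x‖ ≤ C * ‖T x‖) : ‖T x‖ ≤ C * ‖Tadj (T x)‖ := by
  rcases (norm_nonneg (T x)).eq_or_lt with h0 | hpos
  · simp [norm_eq_zero.mp h0.symm]
  refine le_of_mul_le_mul_right ?_ hpos
  calc ‖T x‖ * ‖T x‖ = ‖⟪x, Tadj (T x)⟫‖ := by rw [← hadj, ← norm_sq_eq A, sq]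
    _ ≤ ‖x‖ * ‖Tadj (T x)‖ := norm_inner_le M
    _ ≤ C * ‖T x‖ * ‖Tadj (T x)‖ := by gcongr
    _ = C * ‖Tadj (T x)‖ * ‖T x‖ := by ring

lemma sq_norm_adjoint_le (hadj : ∀ x y, ⟪T x, y⟫ = ⟪x, Tadj y⟫) {t : ℝ} (ht : 0 ≤ t) (y : N) :
    ‖Tadj y‖ ^ 2 ≤ ‖T (Tadj y) + (t : ℂ) • y‖ * ‖y‖ := by
  have hinner : ⟪T (Tadj y) + (t : ℂ) • y, y⟫ = ⟪Tadj y, Tadj y⟫ + (t : ℂ) • ⟪y, y⟫ := by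
    simp [hadj]
  calc ‖Tadj y‖ ^ 2 = ‖⟪Tadj y, Tadj y⟫‖ := norm_sq_eq A
    _ ≤ ‖⟪T (Tadj y) + (t : ℂ) • y, y⟫‖ := by
      rw [hinner]
      refine CStarAlgebra.norm_le_norm_of_nonneg_of_le inner_self_nonneg
        (le_add_of_nonneg_right (smul_nonneg (by exact_mod_cast ht) inner_self_nonneg))
    _ ≤ ‖T (Tadj y) + (t : ℂ) • y‖ * ‖y‖ := norm_inner_le N

lemma norm_le_sq_mul_norm_apply_adjoint_add (hadj : ∀ x y, ⟪T x, y⟫ = ⟪x, Tadj y⟫) {x : M}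
    {C : ℝ} (hx : ‖x‖ ≤ C * ‖T x‖) {t : ℝ} (ht : 0 ≤ t) :
    ‖T x‖ ≤ C ^ 2 * ‖T (Tadj (T x)) + (t : ℂ) • T x‖ := by
  have hsq : ‖T x‖ ^ 2 ≤ C ^ 2 * ‖T (Tadj (T x)) + (t : ℂ) • T x‖ * ‖T x‖ :=
    calc ‖T x‖ ^ 2 ≤ (C * ‖Tadj (T x)‖) ^ 2 :=
          pow_le_pow_left₀ (norm_nonneg _) (norm_le_mul_norm_adjoint hadj hx) 2
      _ = C ^ 2 * ‖Tadj (T x)‖ ^ 2 := mul_pow ..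
      _ ≤ C ^ 2 * (‖T (Tadj (T x)) + (t : ℂ) • T x‖ * ‖T x‖) := by
          gcongr; exact sq_norm_adjoint_le hadj ht (T x)
      _ = _ := (mul_assoc ..).symm
  have := norm_nonneg (T x)
  have : 0 ≤ C ^ 2 * ‖T (Tadj (T x)) + (t : ℂ) • T x‖ := by positivity
  nlinarith

end CStarModule

/-- Let `T` be an adjointable operator between Hilbert `A`-modules with closed range
`N₀ = Ran T`, and let `T₀ : M → N₀` be its corestriction. Then there is `δ > 0` (coming
from the open mapping theorem) such that `‖y‖ ≤ δ⁻² ‖T₀T₀* y‖` for all `y ∈ N₀`; in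
particular `T₀T₀*` is bounded below on `N₀` and invertible on `N₀`. -/
theorem corestriction_bounded_below
    {A : Type*} [CStarAlgebra A] [PartialOrder A] [StarOrderedRing A]
    {M N : Type*} [NormedAddCommGroup M] [NormedSpace ℂ M] [SMul Aᵐᵒᵖ M] [CStarModuleRight A M]
    [NormedAddCommGroup N] [NormedSpace ℂ N] [SMul Aᵐᵒᵖ N] [CStarModuleRight A N]
    [CompleteSpace M] [CompleteSpace N]
    (T : M →L[ℂ] N) (Tadj : N →L[ℂ] M)
    (hadj : ∀ (x : M) (y : N), inner (𝕜 := A) (T x) y = inner (𝕜 := A) x (Tadj y))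
    (hclosed : IsClosed (Set.range T)) :
    ∃ δ : ℝ, 0 < δ ∧
      (∀ y ∈ LinearMap.range (T : M →ₗ[ℂ] N), ‖y‖ ≤ (δ⁻¹) ^ 2 * ‖T (Tadj y)‖) ∧
      (∀ y ∈ LinearMap.range (T : M →ₗ[ℂ] N), ∃ w ∈ LinearMap.range (T : M →ₗ[ℂ] N), T (Tadj w) = y) := by
  set E := LinearMap.range (T : M →ₗ[ℂ] N)
  have hEclosed : IsClosed (E : Set N) := by
    rwa [LinearMap.coe_range, ContinuousLinearMap.coe_coe]
  have : CompleteSpace E := hEclosed.completeSpace_coe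
  obtain ⟨C, hC, hpre⟩ := T.rangeRestrict.exists_preimage_norm_le fun ⟨_, x, hx⟩ =>
    ⟨x, Subtype.ext hx⟩
  have hbound : ∀ t : ℝ, 0 ≤ t → ∀ y ∈ E, ‖y‖ ≤ C ^ 2 * ‖T (Tadj y) + (t : ℂ) • y‖ := by
    intro t ht y hy
    obtain ⟨x, hx, hxC⟩ := hpre ⟨y, hy⟩
    obtain rfl : T x = y := congrArg Subtype.val hx
    exact CStarModule.norm_le_sq_mul_norm_apply_adjoint_add (A := Aᵐᵒᵖ)
      (fun x y => congrArg MulOpposite.op (hadj x y)) hxC ht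
  refine ⟨C⁻¹, inv_pos.mpr hC, fun y hy => by simpa using hbound 0 le_rfl y hy, fun y hy => ?_⟩
  let S : E →L[ℂ] E := (T ∘L Tadj).restrict fun y _ => LinearMap.mem_range_self _ (Tadj y)
  obtain ⟨u, hu⟩ : IsUnit S :=
    ContinuousLinearMap.isUnit_of_forall_norm_le_mul_norm_add (pow_pos hC 2)
      fun t ht z => hbound t ht z z.2
  let w : E := (↑u⁻¹ : E →L[ℂ] E) ⟨y, hy⟩
  have hw : (S w : N) = y := by simpa [hu] using congr(($(u.mul_inv) ⟨y, hy⟩ : N))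
  exact ⟨w, w.2, hw⟩
end
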